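/- Let (u, φ, w) be a smooth solution of the porous-elastic system with microtemperature (with the second-spectrum-free substitution φ_xt = (ρ/b)u_ttt - (μ/b)u_xxt coming from the first equation). Define F(t) = ρ∫₀ˡ u_t u dx + (Jμ/b)∫₀ˡ u_xt u_x dx. Then dF/dt ≤ (Jμ/b + 2ρc_p)‖u_xt‖² - ρ‖u_t‖² - (μ - b²/ξ)‖u_x‖² - (δ/2)‖φ_x‖² - (Jρ/b)‖u_tt‖² - ‖(b/√ξ)u_x + √ξ φ‖² + (d²c_p/(2δ))‖w_x‖², where c_p is the Poincaré constant on (0,l). -/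

import Mathlib

open intervalIntegral

/-- Partial derivative in the spatial variable. -/
noncomputable def pdx (f : ℝ → ℝ → ℝ) : ℝ → ℝ → ℝ := fun x t => deriv (fun y => f y t) x

/-- Partial derivative in the time variable. -/
noncomputable def pdt (f : ℝ → ℝ → ℝ) : ℝ → ℝ → ℝ := fun x t => deriv (fun s => f x s) t

section Helpers

open Function MeasureTheory Metric Set

variable {f : ℝ → ℝ → ℝ}

lemma hasDerivAt_slice_x (hf : ContDiff ℝ (⊤ : ℕ∞) (uncurry f)) (x t : ℝ) :
    HasDerivAt (fun y => f y t) ((fderiv ℝ (uncurry f) (x, t)) (1, 0)) x := by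
  have hF : HasFDerivAt (uncurry f) (fderiv ℝ (uncurry f) (x, t)) (x, t) :=
    (hf.differentiable (by simp) (x, t)).hasFDerivAt
  exact hF.comp_hasDerivAt x ((hasDerivAt_id x).prodMk (hasDerivAt_const x t))

lemma hasDerivAt_slice_t (hf : ContDiff ℝ (⊤ : ℕ∞) (uncurry f)) (x t : ℝ) :
    HasDerivAt (fun s => f x s) ((fderiv ℝ (uncurry f) (x, t)) (0, 1)) t := by
  have hF : HasFDerivAt (uncurry f) (fderiv ℝ (uncurry f) (x, t)) (x, t) :=
    (hf.differentiable (by simp) (x, t)).hasFDerivAt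
  exact hF.comp_hasDerivAt t ((hasDerivAt_const t x).prodMk (hasDerivAt_id t))

lemma pdx_eq_fderiv (hf : ContDiff ℝ (⊤ : ℕ∞) (uncurry f)) (x t : ℝ) :
    pdx f x t = (fderiv ℝ (uncurry f) (x, t)) (1, 0) :=
  (hasDerivAt_slice_x hf x t).deriv

lemma pdt_eq_fderiv (hf : ContDiff ℝ (⊤ : ℕ∞) (uncurry f)) (x t : ℝ) :
    pdt f x t = (fderiv ℝ (uncurry f) (x, t)) (0, 1) :=
  (hasDerivAt_slice_t hf x t).deriv

lemma contDiff_pdx (hf : ContDiff ℝ (⊤ : ℕ∞) (uncurry f)) : ContDiff ℝ (⊤ : ℕ∞) (uncurry (pdx f)) := by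
  have h : uncurry (pdx f) = fun p : ℝ × ℝ => (fderiv ℝ (uncurry f) p) (1, 0) := by
    funext p; exact pdx_eq_fderiv hf p.1 p.2
  rw [h]
  exact (hf.fderiv_right (by simp)).clm_apply contDiff_const

lemma contDiff_pdt (hf : ContDiff ℝ (⊤ : ℕ∞) (uncurry f)) : ContDiff ℝ (⊤ : ℕ∞) (uncurry (pdt f)) := by
  have h : uncurry (pdt f) = fun p : ℝ × ℝ => (fderiv ℝ (uncurry f) p) (0, 1) := by
    funext p; exact pdt_eq_fderiv hf p.1 p.2
  rw [h]
  exact (hf.fderiv_right (by simp)).clm_apply contDiff_const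

lemma pdx_pdt_comm (hf : ContDiff ℝ (⊤ : ℕ∞) (uncurry f)) (x t : ℝ) :
    pdx (pdt f) x t = pdt (pdx f) x t := by
  set F := uncurry f with hFdef
  set G := fderiv ℝ F with hGdef
  set A := fderiv ℝ G (x, t) with hAdef
  have hGd : HasFDerivAt G A (x, t) :=
    (((hf.fderiv_right (m := (⊤ : ℕ∞)) (by simp)).differentiable (by simp)) (x, t)).hasFDerivAt
  have hsymm : ∀ v w : ℝ × ℝ, A v w = A w v :=
    second_derivative_symmetric (fun y => (hf.differentiable (by simp) y).hasFDerivAt) hGd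
  have h1 : pdx (pdt f) x t = A (1, 0) (0, 1) := by
    have e : uncurry (pdt f) = fun p : ℝ × ℝ => G p (0, 1) := by
      funext p; exact pdt_eq_fderiv hf p.1 p.2
    rw [pdx_eq_fderiv (f := pdt f) (contDiff_pdt hf) x t, e]
    have happ : HasFDerivAt (fun p : ℝ × ℝ => G p ((0 : ℝ), (1 : ℝ)))
        (A.flip (0, 1)) (x, t) := by
      have := hGd.clm_apply (hasFDerivAt_const ((0 : ℝ), (1 : ℝ)) (x, t))
      simpa using this
    rw [happ.fderiv]; rfl
  have h2 : pdt (pdx f) x t = A (0, 1) (1, 0) := by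
    have e : uncurry (pdx f) = fun p : ℝ × ℝ => G p (1, 0) := by
      funext p; exact pdx_eq_fderiv hf p.1 p.2
    rw [pdt_eq_fderiv (f := pdx f) (contDiff_pdx hf) x t, e]
    have happ : HasFDerivAt (fun p : ℝ × ℝ => G p ((1 : ℝ), (0 : ℝ)))
        (A.flip (1, 0)) (x, t) := by
      have := hGd.clm_apply (hasFDerivAt_const ((1 : ℝ), (0 : ℝ)) (x, t))
      simpa using this
    rw [happ.fderiv]; rfl
  rw [h1, h2, hsymm]

lemma contDiff_slice_x (hf : ContDiff ℝ (⊤ : ℕ∞) (uncurry f)) (t : ℝ) :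
    ContDiff ℝ (⊤ : ℕ∞) (fun x => f x t) :=
  hf.comp (contDiff_id.prodMk contDiff_const)

lemma contDiff_slice_t (hf : ContDiff ℝ (⊤ : ℕ∞) (uncurry f)) (x : ℝ) :
    ContDiff ℝ (⊤ : ℕ∞) (fun s => f x s) :=
  hf.comp (contDiff_const.prodMk contDiff_id)

lemma hasDerivAt_int (hf : ContDiff ℝ (⊤ : ℕ∞) (uncurry f)) (l t : ℝ) :
    HasDerivAt (fun s => ∫ x in (0:ℝ)..l, f x s) (∫ x in (0:ℝ)..l, pdt f x t) t := by
  have hcont : Continuous (uncurry f) := hf.continuous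
  have hcont' : Continuous (uncurry (pdt f)) := (contDiff_pdt hf).continuous
  have hcx : ∀ s, Continuous (fun x => f x s) := fun s =>
    hcont.comp (continuous_id.prodMk continuous_const)
  have hcx' : ∀ s, Continuous (fun x => pdt f x s) := fun s =>
    hcont'.comp (continuous_id.prodMk continuous_const)
  have hK : IsCompact ((uIcc (0:ℝ) l) ×ˢ (Icc (t-1) (t+1))) :=
    isCompact_uIcc.prod isCompact_Icc
  obtain ⟨C, hC⟩ := hK.exists_bound_of_continuousOn hcont'.continuousOn
  have key := intervalIntegral.hasDerivAt_integral_of_dominated_loc_of_deriv_le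
    (𝕜 := ℝ) (μ := volume) (a := 0) (b := l)
    (F := fun s x => f x s) (F' := fun s x => pdt f x s) (x₀ := t)
    (bound := fun _ => C) (s := Metric.ball t 1) (Metric.ball_mem_nhds t one_pos)
    (Filter.Eventually.of_forall fun s => (hcx s).aestronglyMeasurable)
    ((hcx t).intervalIntegrable 0 l)
    ((hcx' t).aestronglyMeasurable)
    ?_ (intervalIntegrable_const)
    (Filter.Eventually.of_forall fun x _ s _ =>
      ((contDiff_slice_t hf x).differentiable (by simp) s).hasDerivAt)
  · exact key.2
  · refine Filter.Eventually.of_forall fun x hx s hs => ?_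
    have hsmem : s ∈ Icc (t-1) (t+1) := by
      rw [Real.ball_eq_Ioo] at hs
      exact ⟨le_of_lt hs.1, le_of_lt hs.2⟩
    exact hC (x, s) ⟨uIoc_subset_uIcc hx, hsmem⟩

lemma ibp0 {l : ℝ} {g h : ℝ → ℝ} (hg : ContDiff ℝ (⊤ : ℕ∞) g) (hh : ContDiff ℝ (⊤ : ℕ∞) h)
    (h0 : g 0 * h 0 = 0) (hl : g l * h l = 0) :
    (∫ x in (0:ℝ)..l, g x * deriv h x) = -(∫ x in (0:ℝ)..l, deriv g x * h x) := by
  have key := intervalIntegral.integral_mul_deriv_eq_deriv_mul (a := 0) (b := l)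
    (u := g) (v := h) (u' := deriv g) (v' := deriv h)
    (fun x _ => (hg.differentiable (by simp) x).hasDerivAt)
    (fun x _ => (hh.differentiable (by simp) x).hasDerivAt)
    ((hg.continuous_deriv (by simp)).intervalIntegrable 0 l)
    ((hh.continuous_deriv (by simp)).intervalIntegrable 0 l)
  rw [key, h0, hl]; ring

lemma young0 {cp δ d A B : ℝ} (hcp : 0 < cp) (hδ : 0 < δ) :
    -(d * (B * A)) ≤ δ / (2*cp) * A^2 + d^2 * cp / (2*δ) * B^2 := by
  rw [← sub_nonneg]
  have key : δ / (2*cp) * A^2 + d^2 * cp / (2*δ) * B^2 - -(d * (B * A))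
      = (δ * A + cp * d * B)^2 / (2 * cp * δ) := by
    field_simp
    ring
  rw [key]
  positivity

end Helpers

lemma int_comb2 {l c0 c1 c2 : ℝ} {g f1 f2 : ℝ → ℝ}
    (h1 : Continuous f1) (h2 : Continuous f2)
    (hpt : ∀ x, c0 * g x = c1 * f1 x + c2 * f2 x) :
    c0 * (∫ x in (0:ℝ)..l, g x)
      = c1 * (∫ x in (0:ℝ)..l, f1 x) + c2 * (∫ x in (0:ℝ)..l, f2 x) := by
  rw [← integral_const_mul, ← integral_const_mul, ← integral_const_mul,
    ← integral_add ((continuous_const.fun_mul h1).intervalIntegrable 0 l)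
      ((continuous_const.fun_mul h2).intervalIntegrable 0 l)]
  exact integral_congr fun x _ => hpt x

lemma int_comb3 {l c0 c1 c2 c3 : ℝ} {g f1 f2 f3 : ℝ → ℝ}
    (h1 : Continuous f1) (h2 : Continuous f2) (h3 : Continuous f3)
    (hpt : ∀ x, c0 * g x = c1 * f1 x + c2 * f2 x + c3 * f3 x) :
    c0 * (∫ x in (0:ℝ)..l, g x)
      = c1 * (∫ x in (0:ℝ)..l, f1 x) + c2 * (∫ x in (0:ℝ)..l, f2 x)
        + c3 * (∫ x in (0:ℝ)..l, f3 x) := by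
  rw [← integral_const_mul, ← integral_const_mul, ← integral_const_mul, ← integral_const_mul,
    ← integral_add ((continuous_const.fun_mul h1).intervalIntegrable 0 l)
      ((continuous_const.fun_mul h2).intervalIntegrable 0 l),
    ← integral_add (((continuous_const.fun_mul h1).fun_add (continuous_const.fun_mul h2)).intervalIntegrable 0 l)
      ((continuous_const.fun_mul h3).intervalIntegrable 0 l)]
  exact integral_congr fun x _ => hpt x

lemma int_comb4 {l c0 c1 c2 c3 c4 : ℝ} {g f1 f2 f3 f4 : ℝ → ℝ}
    (h1 : Continuous f1) (h2 : Continuous f2) (h3 : Continuous f3) (h4 : Continuous f4)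
    (hpt : ∀ x, c0 * g x = c1 * f1 x + c2 * f2 x + c3 * f3 x + c4 * f4 x) :
    c0 * (∫ x in (0:ℝ)..l, g x)
      = c1 * (∫ x in (0:ℝ)..l, f1 x) + c2 * (∫ x in (0:ℝ)..l, f2 x)
        + c3 * (∫ x in (0:ℝ)..l, f3 x) + c4 * (∫ x in (0:ℝ)..l, f4 x) := by
  rw [← integral_const_mul, ← integral_const_mul, ← integral_const_mul, ← integral_const_mul,
    ← integral_const_mul,
    ← integral_add ((continuous_const.fun_mul h1).intervalIntegrable 0 l)
      ((continuous_const.fun_mul h2).intervalIntegrable 0 l),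
    ← integral_add (((continuous_const.fun_mul h1).fun_add (continuous_const.fun_mul h2)).intervalIntegrable 0 l)
      ((continuous_const.fun_mul h3).intervalIntegrable 0 l),
    ← integral_add ((((continuous_const.fun_mul h1).fun_add (continuous_const.fun_mul h2)).fun_add
      (continuous_const.fun_mul h3)).intervalIntegrable 0 l)
      ((continuous_const.fun_mul h4).intervalIntegrable 0 l)]
  exact integral_congr fun x _ => hpt x

theorem stmt_4 (l ρ mu b J δ xi d α κ k cp : ℝ)
    (hl : 0 < l) (hρ : 0 < ρ) (hmu : 0 < mu) (hb : 0 < b) (hJ : 0 < J)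
    (hδ : 0 < δ) (hxi : 0 < xi) (hd : 0 < d) (hα : 0 < α) (hκ : 0 < κ) (hk : 0 < k)
    (hcond : mu * xi - b ^ 2 > 0) (hcp : 0 < cp)
    (u φ w : ℝ → ℝ → ℝ)
    (hu : ContDiff ℝ (⊤ : ℕ∞) (Function.uncurry u)) (hφ : ContDiff ℝ (⊤ : ℕ∞) (Function.uncurry φ))
    (hw : ContDiff ℝ (⊤ : ℕ∞) (Function.uncurry w))
    (heq1 : ∀ x t, ρ * pdt (pdt u) x t - mu * pdx (pdx u) x t - b * pdx φ x t = 0)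
    (heq2 : ∀ x t, -J * pdx (pdt (pdt u)) x t - δ * pdx (pdx φ) x t
        + b * pdx u x t + xi * φ x t + d * pdx w x t = 0)
    (heq3 : ∀ x t, α * pdt w x t - κ * pdx (pdx w) x t + d * pdx (pdt φ) x t + k * w x t = 0)
    (hbc : ∀ t, u 0 t = 0 ∧ u l t = 0 ∧ φ 0 t = 0 ∧ φ l t = 0 ∧ w 0 t = 0 ∧ w l t = 0)
    (hpoincare : ∀ v : ℝ → ℝ, ContDiff ℝ (⊤ : ℕ∞) v → v 0 = 0 → v l = 0 →
        (∫ x in (0:ℝ)..l, (v x) ^ 2) ≤ cp * ∫ x in (0:ℝ)..l, (deriv v x) ^ 2)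
    (F : ℝ → ℝ)
    (hF : ∀ t, F t = ρ * (∫ x in (0:ℝ)..l, pdt u x t * u x t)
        + (J * mu / b) * (∫ x in (0:ℝ)..l, pdx (pdt u) x t * pdx u x t)) :
    ∀ t : ℝ, deriv F t ≤
        (J * mu / b + 2 * ρ * cp) * (∫ x in (0:ℝ)..l, (pdx (pdt u) x t) ^ 2)
      - ρ * (∫ x in (0:ℝ)..l, (pdt u x t) ^ 2)
      - (mu - b ^ 2 / xi) * (∫ x in (0:ℝ)..l, (pdx u x t) ^ 2)
      - (δ / 2) * (∫ x in (0:ℝ)..l, (pdx φ x t) ^ 2)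
      - (J * ρ / b) * (∫ x in (0:ℝ)..l, (pdt (pdt u) x t) ^ 2)
      - (∫ x in (0:ℝ)..l, ((b / Real.sqrt xi) * pdx u x t + Real.sqrt xi * φ x t) ^ 2)
      + (d ^ 2 * cp / (2 * δ)) * (∫ x in (0:ℝ)..l, (pdx w x t) ^ 2) := by
  intro t
  obtain ⟨hu0, hul, hp0, hpl, hw0, hwl⟩ := hbc t
  -- boundary values of time derivatives
  have hu0f : (fun s => u 0 s) = fun _ => (0:ℝ) := funext fun s => (hbc s).1
  have hulf : (fun s => u l s) = fun _ => (0:ℝ) := funext fun s => (hbc s).2.1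
  have hAt0f : (fun s => pdt u 0 s) = fun _ => (0:ℝ) := funext fun s => by
    show deriv (fun r => u 0 r) s = 0; rw [hu0f]; simp
  have hAtlf : (fun s => pdt u l s) = fun _ => (0:ℝ) := funext fun s => by
    show deriv (fun r => u l r) s = 0; rw [hulf]; simp
  have hAt0 : pdt u 0 t = 0 := congrFun hAt0f t
  have hAtl : pdt u l t = 0 := congrFun hAtlf t
  have hAtt0 : pdt (pdt u) 0 t = 0 := by
    show deriv (fun s => pdt u 0 s) t = 0; rw [hAt0f]; simp
  have hAttl : pdt (pdt u) l t = 0 := by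
    show deriv (fun s => pdt u l s) t = 0; rw [hAtlf]; simp
  -- smoothness
  have hut : ContDiff ℝ (⊤ : ℕ∞) (Function.uncurry (pdt u)) := contDiff_pdt hu
  have hutt : ContDiff ℝ (⊤ : ℕ∞) (Function.uncurry (pdt (pdt u))) := contDiff_pdt hut
  have sa := contDiff_slice_x hu t
  have sat := contDiff_slice_x hut t
  have satt := contDiff_slice_x hutt t
  have sax := contDiff_slice_x (contDiff_pdx hu) t
  have saxt := contDiff_slice_x (contDiff_pdx hut) t
  have saxtt := contDiff_slice_x (contDiff_pdx hutt) t
  have saxx := contDiff_slice_x (contDiff_pdx (contDiff_pdx hu)) t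
  have sp := contDiff_slice_x hφ t
  have spx := contDiff_slice_x (contDiff_pdx hφ) t
  have spxx := contDiff_slice_x (contDiff_pdx (contDiff_pdx hφ)) t
  have swx := contDiff_slice_x (contDiff_pdx hw) t
  -- derivative of F
  have hFeq : F = fun s => ρ * (∫ x in (0:ℝ)..l, pdt u x s * u x s)
      + (J * mu / b) * (∫ x in (0:ℝ)..l, pdx (pdt u) x s * pdx u x s) := funext hF
  have hsm1 : ContDiff ℝ (⊤ : ℕ∞) (Function.uncurry fun x s => pdt u x s * u x s) := hut.mul hu
  have hsm2 : ContDiff ℝ (⊤ : ℕ∞) (Function.uncurry fun x s => pdx (pdt u) x s * pdx u x s) :=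
    (contDiff_pdx hut).mul (contDiff_pdx hu)
  have hd1 := hasDerivAt_int hsm1 l t
  have hd2 := hasDerivAt_int hsm2 l t
  have hdF : HasDerivAt F
      (ρ * (∫ x in (0:ℝ)..l, pdt (fun x s => pdt u x s * u x s) x t)
        + (J * mu / b) * (∫ x in (0:ℝ)..l, pdt (fun x s => pdx (pdt u) x s * pdx u x s) x t))
      t := by
    rw [hFeq]
    exact (hd1.const_mul ρ).add (hd2.const_mul (J * mu / b))
  have hDF := hdF.deriv
  have e1 : ∀ x : ℝ, pdt (fun x s => pdt u x s * u x s) x t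
      = pdt (pdt u) x t * u x t + pdt u x t * pdt u x t := fun x =>
    deriv_mul ((contDiff_slice_t hut x).differentiable (by simp) t)
      ((contDiff_slice_t hu x).differentiable (by simp) t)
  have hint1 : (∫ x in (0:ℝ)..l, pdt (fun x s => pdt u x s * u x s) x t)
      = (∫ x in (0:ℝ)..l, pdt (pdt u) x t * u x t)
        + ∫ x in (0:ℝ)..l, (pdt u x t)^2 := by
    rw [integral_congr (g := fun x => pdt (pdt u) x t * u x t + pdt u x t * pdt u x t)
      (fun x _ => e1 x),
      integral_add ((satt.continuous.fun_mul sa.continuous).intervalIntegrable 0 l)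
        ((sat.continuous.fun_mul sat.continuous).intervalIntegrable 0 l)]
    congr 1
    exact integral_congr fun x _ => by ring
  have e2 : ∀ x : ℝ, pdt (fun x s => pdx (pdt u) x s * pdx u x s) x t
      = pdx (pdt (pdt u)) x t * pdx u x t + pdx (pdt u) x t * pdx (pdt u) x t := by
    intro x
    have h : pdt (fun x s => pdx (pdt u) x s * pdx u x s) x t
        = pdt (pdx (pdt u)) x t * pdx u x t + pdx (pdt u) x t * pdt (pdx u) x t :=
      deriv_mul ((contDiff_slice_t (contDiff_pdx hut) x).differentiable (by simp) t)
        ((contDiff_slice_t (contDiff_pdx hu) x).differentiable (by simp) t)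
    have c1 : pdx (pdt (pdt u)) x t = pdt (pdx (pdt u)) x t := pdx_pdt_comm hut x t
    have c2 : pdx (pdt u) x t = pdt (pdx u) x t := pdx_pdt_comm hu x t
    linear_combination h - pdx u x t * c1 - pdx (pdt u) x t * c2
  have hint2 : (∫ x in (0:ℝ)..l, pdt (fun x s => pdx (pdt u) x s * pdx u x s) x t)
      = (∫ x in (0:ℝ)..l, pdx (pdt (pdt u)) x t * pdx u x t)
        + ∫ x in (0:ℝ)..l, (pdx (pdt u) x t)^2 := by
    rw [integral_congr
      (g := fun x => pdx (pdt (pdt u)) x t * pdx u x t + pdx (pdt u) x t * pdx (pdt u) x t)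
      (fun x _ => e2 x),
      integral_add ((saxtt.continuous.fun_mul sax.continuous).intervalIntegrable 0 l)
        ((saxt.continuous.fun_mul saxt.continuous).intervalIntegrable 0 l)]
    congr 1
    exact integral_congr fun x _ => by ring
  rw [hint1, hint2] at hDF
  -- integration by parts
  have E2 : (∫ x in (0:ℝ)..l, u x t * pdx (pdx u) x t)
      = -(∫ x in (0:ℝ)..l, (pdx u x t)^2) := by
    have h : (∫ x in (0:ℝ)..l, u x t * pdx (pdx u) x t)
        = -(∫ x in (0:ℝ)..l, pdx u x t * pdx u x t) :=
      ibp0 sa sax (by show u 0 t * pdx u 0 t = 0; rw [hu0]; ring)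
        (by show u l t * pdx u l t = 0; rw [hul]; ring)
    rw [h]
    congr 1
    exact integral_congr fun x _ => by ring
  have E3 : (∫ x in (0:ℝ)..l, u x t * pdx φ x t)
      = -(∫ x in (0:ℝ)..l, pdx u x t * φ x t) :=
    ibp0 sa sp (by show u 0 t * φ 0 t = 0; rw [hu0]; ring)
      (by show u l t * φ l t = 0; rw [hul]; ring)
  have E4 : (∫ x in (0:ℝ)..l, pdx u x t * pdx (pdt (pdt u)) x t)
      = -(∫ x in (0:ℝ)..l, pdx (pdx u) x t * pdt (pdt u) x t) :=
    ibp0 sax satt (by show pdx u 0 t * pdt (pdt u) 0 t = 0; rw [hAtt0]; ring)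
      (by show pdx u l t * pdt (pdt u) l t = 0; rw [hAttl]; ring)
  have E6 : (∫ x in (0:ℝ)..l, pdt (pdt u) x t * pdx φ x t)
      = -(∫ x in (0:ℝ)..l, pdx (pdt (pdt u)) x t * φ x t) :=
    ibp0 satt sp (by show pdt (pdt u) 0 t * φ 0 t = 0; rw [hAtt0]; ring)
      (by show pdt (pdt u) l t * φ l t = 0; rw [hAttl]; ring)
  have E8 : (∫ x in (0:ℝ)..l, φ x t * pdx (pdx φ) x t)
      = -(∫ x in (0:ℝ)..l, (pdx φ x t)^2) := by
    have h : (∫ x in (0:ℝ)..l, φ x t * pdx (pdx φ) x t)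
        = -(∫ x in (0:ℝ)..l, pdx φ x t * pdx φ x t) :=
      ibp0 sp spx (by show φ 0 t * pdx φ 0 t = 0; rw [hp0]; ring)
        (by show φ l t * pdx φ l t = 0; rw [hpl]; ring)
    rw [h]
    congr 1
    exact integral_congr fun x _ => by ring
  -- PDE substitutions
  have E1 : ρ * (∫ x in (0:ℝ)..l, pdt (pdt u) x t * u x t)
      = mu * (∫ x in (0:ℝ)..l, u x t * pdx (pdx u) x t)
        + b * (∫ x in (0:ℝ)..l, u x t * pdx φ x t) :=
    int_comb2 (sa.continuous.fun_mul saxx.continuous) (sa.continuous.fun_mul spx.continuous)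
      (fun x => by linear_combination (u x t) * heq1 x t)
  have E5 : mu * (∫ x in (0:ℝ)..l, pdx (pdx u) x t * pdt (pdt u) x t)
      = ρ * (∫ x in (0:ℝ)..l, (pdt (pdt u) x t)^2)
        + (-b) * (∫ x in (0:ℝ)..l, pdt (pdt u) x t * pdx φ x t) :=
    int_comb2 (satt.continuous.fun_pow 2)
      (satt.continuous.fun_mul spx.continuous)
      (fun x => by linear_combination (-(pdt (pdt u) x t)) * heq1 x t)
  have E7 : J * (∫ x in (0:ℝ)..l, pdx (pdt (pdt u)) x t * φ x t)
      = (-δ) * (∫ x in (0:ℝ)..l, φ x t * pdx (pdx φ) x t)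
        + b * (∫ x in (0:ℝ)..l, pdx u x t * φ x t)
        + xi * (∫ x in (0:ℝ)..l, (φ x t)^2)
        + d * (∫ x in (0:ℝ)..l, pdx w x t * φ x t) :=
    int_comb4 (sp.continuous.fun_mul spxx.continuous) (sax.continuous.fun_mul sp.continuous)
      (sp.continuous.fun_pow 2) (swx.continuous.fun_mul sp.continuous)
      (fun x => by linear_combination (-(φ x t)) * heq2 x t)
  -- the square expansion
  have hIsq : (∫ x in (0:ℝ)..l, ((b / Real.sqrt xi) * pdx u x t + Real.sqrt xi * φ x t)^2)
      = b^2/xi * (∫ x in (0:ℝ)..l, (pdx u x t)^2)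
        + 2*b * (∫ x in (0:ℝ)..l, pdx u x t * φ x t)
        + xi * (∫ x in (0:ℝ)..l, (φ x t)^2) := by
    have hpt : ∀ x : ℝ, (1:ℝ) * (((b / Real.sqrt xi) * pdx u x t + Real.sqrt xi * φ x t)^2)
        = b^2/xi * (pdx u x t)^2 + 2*b * (pdx u x t * φ x t) + xi * (φ x t)^2 := by
      intro x
      have hs : Real.sqrt xi ^ 2 = xi := Real.sq_sqrt hxi.le
      have hs0 : Real.sqrt xi ≠ 0 := ne_of_gt (Real.sqrt_pos.mpr hxi)
      rw [one_mul, ← hs]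
      field_simp
      rw [Real.sqrt_sq (Real.sqrt_nonneg xi)]
      ring
    have := int_comb3 (l := l) (sax.continuous.fun_pow 2)
      (sax.continuous.fun_mul sp.continuous) (sp.continuous.fun_pow 2) hpt
    simpa using this
  -- Poincaré
  have P1 : (∫ x in (0:ℝ)..l, (pdt u x t)^2)
      ≤ cp * ∫ x in (0:ℝ)..l, (pdx (pdt u) x t)^2 :=
    hpoincare (fun x => pdt u x t) sat hAt0 hAtl
  have P2 : (∫ x in (0:ℝ)..l, (φ x t)^2) ≤ cp * ∫ x in (0:ℝ)..l, (pdx φ x t)^2 :=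
    hpoincare (fun x => φ x t) sp hp0 hpl
  -- Young inequality term
  have P3 : -(d * ∫ x in (0:ℝ)..l, pdx w x t * φ x t)
      ≤ δ/(2*cp) * (∫ x in (0:ℝ)..l, (φ x t)^2)
        + d^2*cp/(2*δ) * (∫ x in (0:ℝ)..l, (pdx w x t)^2) := by
    have hmono := intervalIntegral.integral_mono_on (μ := MeasureTheory.volume) hl.le
      (((continuous_const.fun_mul (swx.continuous.fun_mul sp.continuous)).fun_neg).intervalIntegrable 0 l)
      (((continuous_const.fun_mul (sp.continuous.fun_pow 2)).add
        (continuous_const.fun_mul (swx.continuous.fun_pow 2))).intervalIntegrable 0 l)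
      (fun x _ => young0 (A := φ x t) (B := pdx w x t) (d := d) hcp hδ)
    have hL : (∫ x in (0:ℝ)..l, -(d * (pdx w x t * φ x t)))
        = -(d * ∫ x in (0:ℝ)..l, pdx w x t * φ x t) := by
      rw [integral_neg, integral_const_mul]
    have hR : (∫ x in (0:ℝ)..l, (δ/(2*cp) * (φ x t)^2 + d^2*cp/(2*δ) * (pdx w x t)^2))
        = δ/(2*cp) * (∫ x in (0:ℝ)..l, (φ x t)^2)
          + d^2*cp/(2*δ) * (∫ x in (0:ℝ)..l, (pdx w x t)^2) := by
      rw [integral_add ((continuous_const.fun_mul (sp.continuous.fun_pow 2)).intervalIntegrable 0 l)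
        ((continuous_const.fun_mul (swx.continuous.fun_pow 2)).intervalIntegrable 0 l),
        integral_const_mul, integral_const_mul]
    rw [← hL, ← hR]
    exact hmono
  -- assembling
  have hb' : b ≠ 0 := ne_of_gt hb
  have hS1 : ρ * (∫ x in (0:ℝ)..l, pdt (pdt u) x t * u x t)
      = -(mu * (∫ x in (0:ℝ)..l, (pdx u x t)^2))
        - b * (∫ x in (0:ℝ)..l, pdx u x t * φ x t) := by
    linear_combination E1 + mu * E2 + b * E3
  have hcomm24 : (∫ x in (0:ℝ)..l, pdx (pdt (pdt u)) x t * pdx u x t)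
      = ∫ x in (0:ℝ)..l, pdx u x t * pdx (pdt (pdt u)) x t :=
    integral_congr fun x _ => mul_comm _ _
  have hS2 : (J * mu / b) * (∫ x in (0:ℝ)..l, pdx (pdt (pdt u)) x t * pdx u x t)
      = -((J * ρ / b) * (∫ x in (0:ℝ)..l, (pdt (pdt u) x t)^2))
        - δ * (∫ x in (0:ℝ)..l, (pdx φ x t)^2)
        - b * (∫ x in (0:ℝ)..l, pdx u x t * φ x t)
        - xi * (∫ x in (0:ℝ)..l, (φ x t)^2)
        - d * (∫ x in (0:ℝ)..l, pdx w x t * φ x t) := by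
    have hbb : b * b⁻¹ = (1:ℝ) := mul_inv_cancel₀ hb'
    linear_combination (J * mu / b) * hcomm24 + (J * mu / b) * E4 - (J / b) * E5
      + J * E6 - E7 + δ * E8
      + (J * (∫ x in (0:ℝ)..l, pdt (pdt u) x t * pdx φ x t)) * hbb
  have P1' : 2 * ρ * (∫ x in (0:ℝ)..l, (pdt u x t)^2)
      ≤ 2 * ρ * (cp * ∫ x in (0:ℝ)..l, (pdx (pdt u) x t)^2) := by
    exact mul_le_mul_of_nonneg_left P1 (by positivity)
  have P2' : δ/(2*cp) * (∫ x in (0:ℝ)..l, (φ x t)^2)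
      ≤ δ/(2*cp) * (cp * ∫ x in (0:ℝ)..l, (pdx φ x t)^2) :=
    mul_le_mul_of_nonneg_left P2 (by positivity)
  have P2'' : δ/(2*cp) * (cp * ∫ x in (0:ℝ)..l, (pdx φ x t)^2)
      = δ/2 * ∫ x in (0:ℝ)..l, (pdx φ x t)^2 := by
    field_simp
  rw [hDF, hIsq]
  linarith [hS1, hS2, P1', P2', P2'', P3]
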